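/- arXiv:1506.00684 — 2 statements merged into one kernel-verified Lean document; each statement's English description precedes it below -/
import Mathlib

section
/- Let ν ≥ 2, c ≥ 1, let t be defined as t = ⌈(c-1)/ν⌉ + 1 if c > (ν-1)² and t = ⌈c/(ν-1)⌉ otherwise, and let α = max{(νt-ν+1)/(tc), 1/t}. Then (α - 1/t)·(ν-1)·(t-1) + α·(c - (ν-1)(t-1)) ≥ 1. -/
/-! Over the `c` servers the stored amount is `α c - (ν - 1)(t - 1)/t`, so the claim says exactly
`α ≥ (ν t - ν + 1)/(t c)`, which is the first term of the maximum defining `α`. -/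

section StoredAmount

variable {K : Type*} [Field K] [LinearOrder K] [IsStrictOrderedRing K]

theorem one_le_stored_amount {ν c t α : K} (ht : 0 < t) (hc : 0 < c)
    (hα : (ν * t - ν + 1) / (t * c) ≤ α) :
    1 ≤ (α - 1 / t) * (ν - 1) * (t - 1) + α * (c - (ν - 1) * (t - 1)) := by
  have hα' : ν * t - ν + 1 ≤ α * (t * c) := (div_le_iff₀ (mul_pos ht hc)).mp hα
  have hscaled : t * ((α - 1 / t) * (ν - 1) * (t - 1) + α * (c - (ν - 1) * (t - 1)))
      = α * (t * c) - (ν - 1) * (t - 1) := by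
    field_simp
    ring
  refine le_of_mul_le_mul_left ?_ ht
  rw [mul_one, hscaled]
  linarith

end StoredAmount

theorem group_size_pos {ν c : ℤ} (hν : 2 ≤ ν) (hc : 1 ≤ c) :
    0 < if (ν - 1) ^ 2 < c then ⌈((c : ℚ) - 1) / (ν : ℚ)⌉ + 1
      else ⌈(c : ℚ) / ((ν : ℚ) - 1)⌉ := by
  have hνq : (2 : ℚ) ≤ ν := by exact_mod_cast hν
  have hcq : (1 : ℚ) ≤ c := by exact_mod_cast hc
  split_ifs
  · have : 0 ≤ ⌈((c : ℚ) - 1) / (ν : ℚ)⌉ :=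
      Int.ceil_nonneg (div_nonneg (by linarith) (by linarith))
    omega
  · exact Int.ceil_pos.mpr (div_pos (by linarith) (by linarith))

theorem stmt7 (ν c : ℤ) (hν : 2 ≤ ν) (hc : 1 ≤ c) (t : ℤ)
    (ht : t = if (ν - 1) ^ 2 < c then ⌈((c : ℚ) - 1) / (ν : ℚ)⌉ + 1
              else ⌈(c : ℚ) / ((ν : ℚ) - 1)⌉)
    (α : ℚ) (hα : α = max (((ν : ℚ) * t - ν + 1) / ((t : ℚ) * c)) (1 / (t : ℚ))) :
    1 ≤ (α - 1 / (t : ℚ)) * ((ν : ℚ) - 1) * ((t : ℚ) - 1) +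
        α * ((c : ℚ) - ((ν : ℚ) - 1) * ((t : ℚ) - 1)) := by
  have ht0 : (0 : ℚ) < t := by exact_mod_cast ht ▸ group_size_pos hν hc
  have hc0 : (0 : ℚ) < c := by exact_mod_cast hc
  exact one_le_stored_amount ht0 hc0 (hα ▸ le_max_left _ _)
end

section
/- For positive integers c and ν with 1 ≤ c, ν ≥ 2, and t defined piecewise as in the construction (t = ⌈(c-1)/ν⌉+1 if c > (ν-1)², t = ⌈c/(ν-1)⌉ otherwise), the storage cost α = max{(νt-ν+1)/(tc), 1/t} satisfies α ≥ ν/(c+ν-1). -/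
/-!
The two terms of the maximum trade off around `t = (c + ν - 1) / ν`: the second one, `1 / t`, is at
least `ν / (c + ν - 1)` exactly when `ν t ≤ c + ν - 1`, while clearing denominators shows that the
first one exceeds `ν / (c + ν - 1)` by a quantity of the sign of `(ν - 1) (ν t - (c + ν - 1))`.
Hence the bound holds for every positive `t`, and the piecewise choice of `t` is positive.
-/

section StorageCost

variable {K : Type*} [Field K] [LinearOrder K] [IsStrictOrderedRing K]

def storageCost (ν c t : K) : K :=
  max ((ν * t - ν + 1) / (t * c)) (1 / t)

theorem div_le_storageCost {ν c t : K} (hν : 1 ≤ ν) (hc : 0 < c) (ht : 0 < t) :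
    ν / (c + ν - 1) ≤ storageCost ν c t := by
  have hden : 0 < c + ν - 1 := by linarith
  rcases le_total (c + ν - 1) (ν * t) with hle | hle
  · refine le_max_of_le_left ?_
    rw [div_le_div_iff₀ hden (mul_pos ht hc)]
    have key : 0 ≤ (ν - 1) * (ν * t - (c + ν - 1)) :=
      mul_nonneg (sub_nonneg.mpr hν) (sub_nonneg.mpr hle)
    linear_combination key
  · refine le_max_of_le_right ?_
    rw [div_le_div_iff₀ hden ht]
    linarith

end StorageCost

theorem stmt16 (ν c : ℤ) (hν : 2 ≤ ν) (hc : 1 ≤ c) (t : ℤ)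
    (ht : t = if (ν - 1) ^ 2 < c then ⌈((c : ℚ) - 1) / (ν : ℚ)⌉ + 1
              else ⌈(c : ℚ) / ((ν : ℚ) - 1)⌉)
    (α : ℚ) (hα : α = max (((ν : ℚ) * t - ν + 1) / ((t : ℚ) * c)) (1 / (t : ℚ))) :
    (ν : ℚ) / ((c : ℚ) + ν - 1) ≤ α := by
  have hνQ : (2 : ℚ) ≤ ν := by exact_mod_cast hν
  have hcQ : (1 : ℚ) ≤ c := by exact_mod_cast hc
  have ht_pos : 0 < t := by
    rw [ht]
    split_ifs
    · have : 0 ≤ ⌈((c : ℚ) - 1) / ν⌉ := Int.ceil_nonneg (div_nonneg (by linarith) (by linarith))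
      omega
    · exact Int.ceil_pos.mpr (div_pos (by linarith) (by linarith))
  rw [hα]
  exact div_le_storageCost (by linarith) (by linarith) (by exact_mod_cast ht_pos)
end
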